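/- arXiv:0705.0734 — 2 statements merged into one kernel-verified Lean document; each statement's English description precedes it below -/
import Mathlib

section
/- Let S and T be c-semirings whose induced orders are total and whose multiplicative operations are idempotent (hence are greatest lower bound operators). Then a monotonic mapping α : S → T is a semiring homomorphism if and only if α(0_S) = 0_T and α(1_S) = 1_T. -/
structure CSemiring (S : Type*) where
  add : S → S → S
  mul : S → S → S
  zero : S
  one : S
  add_comm : ∀ a b, add a b = add b a
  add_assoc : ∀ a b c, add (add a b) c = add a (add b c)
  add_idem : ∀ a, add a a = a
  add_zero : ∀ a, add a zero = a
  add_one : ∀ a, add a one = one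
  mul_comm : ∀ a b, mul a b = mul b a
  mul_assoc : ∀ a b c, mul (mul a b) c = mul a (mul b c)
  mul_one : ∀ a, mul a one = a
  mul_zero : ∀ a, mul a zero = zero
  left_distrib : ∀ a b c, mul a (add b c) = add (mul a b) (mul a c)

/-- The induced order: `a ≤ b` iff `a + b = b`. -/
def CSemiring.le {S : Type*} (C : CSemiring S) (a b : S) : Prop := C.add a b = b

/-- Induced strict order. -/
def CSemiring.lt {S : Type*} (C : CSemiring S) (a b : S) : Prop := C.le a b ∧ a ≠ b

/-- Semiring homomorphism: preserves 0, 1, + and ×. -/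
def CSemiring.isHom {S T : Type*} (C : CSemiring S) (D : CSemiring T) (α : S → T) : Prop :=
  α C.zero = D.zero ∧ α C.one = D.one ∧
  (∀ a b, α (C.add a b) = D.add (α a) (α b)) ∧
  (∀ a b, α (C.mul a b) = D.mul (α a) (α b))

/-- Product over a list (finite multiset) of elements. -/
def CSemiring.listProd {S : Type*} (C : CSemiring S) (l : List S) : S := l.foldr C.mul C.one

/-- Product of a finite family. -/
def CSemiring.finProd {S : Type*} (C : CSemiring S) {m : ℕ} (f : Fin m → S) : S :=
  C.listProd (List.ofFn f)

/-- Sum of a finite family. -/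
def CSemiring.finSum {S : Type*} (C : CSemiring S) {n : ℕ} (f : Fin n → S) : S :=
  (List.ofFn f).foldr C.add C.zero

/-- Condition (Equation 1): for all positive m,n and families u,v,
if Σᵢ Πⱼ α(uᵢⱼ) < Σᵢ Πⱼ α(vᵢⱼ) in T then Σᵢ Πⱼ uᵢⱼ < Σᵢ Πⱼ vᵢⱼ in S. -/
def CSemiring.eq1Cond {S T : Type*} (C : CSemiring S) (D : CSemiring T) (α : S → T) : Prop :=
  ∀ (m n : ℕ), 0 < m → 0 < n → ∀ (u v : Fin n → Fin m → S),
    D.lt (D.finSum fun i => D.finProd fun j => α (u i j))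
         (D.finSum fun i => D.finProd fun j => α (v i j)) →
    C.lt (C.finSum fun i => C.finProd fun j => u i j)
         (C.finSum fun i => C.finProd fun j => v i j)

/-! When the orders are total, `+` is the maximum, and an idempotent `×` is the minimum: `a * b ≤ a`
always (distribute `a` over `b + 1 = 1`), while `a ≤ b` gives `a = a * a ≤ a * b`. A monotone map
commutes with maximum and minimum, so only the constants remain to be checked. -/

namespace CSemiring

variable {S T : Type*}

lemma le_antisymm (C : CSemiring S) {a b : S} (hab : C.le a b) (hba : C.le b a) : a = b := by
  unfold CSemiring.le at *
  rw [← hba, C.add_comm, hab]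

lemma mul_le_left (C : CSemiring S) (a b : S) : C.le (C.mul a b) a := by
  have h := C.left_distrib a b C.one
  rw [C.add_one, C.mul_one] at h
  exact h.symm

lemma mul_eq_left_of_le (C : CSemiring S) (idem : ∀ x, C.mul x x = x) {a b : S}
    (hab : C.le a b) : C.mul a b = a := by
  refine C.le_antisymm (C.mul_le_left a b) ?_
  have h := C.left_distrib a a b
  rw [hab, idem] at h
  exact h.symm

lemma map_add_of_monotone (C : CSemiring S) (D : CSemiring T)
    (tot : ∀ a b : S, C.le a b ∨ C.le b a) {α : S → T}
    (mono : ∀ a b, C.le a b → D.le (α a) (α b)) (a b : S) :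
    α (C.add a b) = D.add (α a) (α b) := by
  rcases tot a b with hab | hba
  · rw [hab, mono a b hab]
  · rw [C.add_comm, hba, D.add_comm, mono b a hba]

lemma map_mul_of_monotone (C : CSemiring S) (D : CSemiring T)
    (tot : ∀ a b : S, C.le a b ∨ C.le b a)
    (idemS : ∀ a, C.mul a a = a) (idemT : ∀ a, D.mul a a = a) {α : S → T}
    (mono : ∀ a b, C.le a b → D.le (α a) (α b)) (a b : S) :
    α (C.mul a b) = D.mul (α a) (α b) := by
  rcases tot a b with hab | hba
  · rw [C.mul_eq_left_of_le idemS hab, D.mul_eq_left_of_le idemT (mono a b hab)]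
  · rw [C.mul_comm, D.mul_comm, C.mul_eq_left_of_le idemS hba,
      D.mul_eq_left_of_le idemT (mono b a hba)]

end CSemiring

theorem stmt5_general {S T : Type*} (C : CSemiring S) (D : CSemiring T)
    (totS : ∀ a b : S, C.le a b ∨ C.le b a)
    (idemS : ∀ a, C.mul a a = a) (idemT : ∀ a, D.mul a a = a)
    (α : S → T) (mono : ∀ a b, C.le a b → D.le (α a) (α b)) :
    C.isHom D α ↔ (α C.zero = D.zero ∧ α C.one = D.one) :=
  ⟨fun ⟨h0, h1, _, _⟩ => ⟨h0, h1⟩, fun ⟨h0, h1⟩ =>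
    ⟨h0, h1, C.map_add_of_monotone D totS mono, C.map_mul_of_monotone D totS idemS idemT mono⟩⟩

theorem stmt5 {S T : Type*} (C : CSemiring S) (D : CSemiring T)
    (totS : ∀ a b : S, C.le a b ∨ C.le b a)
    (totT : ∀ a b : T, D.le a b ∨ D.le b a)
    (idemS : ∀ a, C.mul a a = a) (idemT : ∀ a, D.mul a a = a)
    (α : S → T) (mono : ∀ a b, C.le a b → D.le (α a) (α b)) :
    C.isHom D α ↔ (α C.zero = D.zero ∧ α C.one = D.one) :=
  stmt5_general C D totS idemS idemT α mono
end

section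
/- Let α : S → T be a mapping between c-semirings with α(0) = 0 and α(1) = 1, satisfying: for all positive integers m, n and families u_{ij}, v_{ij} in S, if Σ_i Π_j α(u_{ij}) < Σ_i Π_j α(v_{ij}) in T then Σ_i Π_j u_{ij} < Σ_i Π_j v_{ij} in S. Then α preserves sums: α(u + v) = α(u) + α(v) for all u, v ∈ S. -/
/-
Condition (1) is applied with `n = 3` summands of single factors (`m = 1`). Put `w = u + v`,
`a = α w` and `b = α u + α v`. The triples `(w, w, w)`, `(u, v, v)` and `(w, u, v)` all sum to `w`
in `S`, while their images sum to `a`, `b` and `a + b` in `T`. Since `a, b ≤ a + b`, a strict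
inequality in `T` would be reflected to a strict inequality `w < w` in `S`; hence `a = a + b = b`.
-/

namespace CSemiring

variable {S T : Type*}

theorem le_self_add (C : CSemiring S) (a b : S) : C.le a (C.add a b) := by
  rw [le, ← C.add_assoc, C.add_idem]

theorem le_add_self (C : CSemiring S) (a b : S) : C.le b (C.add a b) := by
  rw [C.add_comm]
  exact C.le_self_add b a

theorem finProd_fin_one (C : CSemiring S) (f : Fin 1 → S) : C.finProd f = f 0 := by
  simp [finProd, listProd, C.mul_one]

theorem finSum_fin_three (C : CSemiring S) (f : Fin 3 → S) :
    C.finSum f = C.add (f 0) (C.add (f 1) (f 2)) := by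
  simp [finSum, List.ofFn_succ, C.add_zero]

theorem eq1Cond.finSum_eq_of_le {C : CSemiring S} {D : CSemiring T} {α : S → T}
    (h : C.eq1Cond D α) {n : ℕ} (hn : 0 < n) {u v : Fin n → S}
    (hsum : C.finSum u = C.finSum v)
    (hle : D.le (D.finSum fun i => α (u i)) (D.finSum fun i => α (v i))) :
    (D.finSum fun i => α (u i)) = D.finSum fun i => α (v i) := by
  by_contra hne
  have hlt := h 1 n one_pos hn (fun i _ => u i) (fun i _ => v i)
  simp only [finProd_fin_one] at hlt
  exact (hlt ⟨hle, hne⟩).2 hsum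

end CSemiring

theorem stmt9_general {S T : Type*} (C : CSemiring S) (D : CSemiring T) (α : S → T)
    (heq1 : C.eq1Cond D α) :
    ∀ u v : S, α (C.add u v) = D.add (α u) (α v) := by
  intro u v
  set w := C.add u v with hw
  have hS : ∀ x y z : S, C.finSum ![x, y, z] = C.add x (C.add y z) :=
    fun x y z => C.finSum_fin_three _
  have hT : ∀ x y z : S, (D.finSum fun i => α (![x, y, z] i)) = D.add (α x) (D.add (α y) (α z)) :=
    fun x y z => D.finSum_fin_three _
  have hwww : C.finSum ![w, w, w] = w := by rw [hS, C.add_idem, C.add_idem]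
  have hwuv : C.finSum ![w, u, v] = w := by rw [hS, ← hw, C.add_idem]
  have huvv : C.finSum ![u, v, v] = w := by rw [hS, C.add_idem, ← hw]
  have ha := heq1.finSum_eq_of_le (by norm_num) (hwww.trans hwuv.symm)
    (by rw [hT, hT, D.add_idem, D.add_idem]; exact D.le_self_add _ _)
  have hb := heq1.finSum_eq_of_le (by norm_num) (huvv.trans hwuv.symm)
    (by rw [hT, hT, D.add_idem]; exact D.le_add_self _ _)
  rw [hT, hT, D.add_idem, D.add_idem] at ha
  rw [hT, hT, D.add_idem] at hb
  exact ha.trans hb.symm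

theorem stmt9 {S T : Type*} (C : CSemiring S) (D : CSemiring T) (α : S → T)
    (h0 : α C.zero = D.zero) (h1 : α C.one = D.one)
    (heq1 : C.eq1Cond D α) :
    ∀ u v : S, α (C.add u v) = D.add (α u) (α v) :=
  stmt9_general C D α heq1
end
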